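/- If p ∈ k[X₁,...,Xₙ] is an ordinary polynomial, then X_{i+1}^{−1} Δᵢ(X_{i+1} p) lies in k[X₁,...,Xₙ]. -/

import Mathlib

/-!
Write `x = X_i`, `y = X_{i+1}` and `s = s_i`. For a polynomial `p`, the difference `p - s p` is
`(y - x) h` for a polynomial `h`: the polynomials with this property form a subalgebra, by the
twisted Leibniz rule `pq - s(pq) = (p - s p) q + s(p) (q - s q)`, and it contains every
variable.
Hence `(1 - x y⁻¹) (y (y h + s p)) = y p - x (s p) = (1 - x y⁻¹) Δ(y p)`. Since `1 - X^v` is a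
nonzerodivisor for `v ≠ 0` (compare the extreme exponents of a would-be annihilated element),
`y⁻¹ Δ(y p) = y h + s p`, a polynomial.
-/

/-- The Laurent monomial `X^v` in `k[X₁^{±1},…,Xₙ^{±1}] = k[Fin n →₀ ℤ]`. -/
noncomputable def mono {k : Type*} [CommRing k] {n : ℕ} (v : Fin n →₀ ℤ) :
    AddMonoidAlgebra k (Fin n →₀ ℤ) :=
  AddMonoidAlgebra.single v 1

/-- The `k`-algebra automorphism of the Laurent polynomial ring interchanging
the variables `X_a` and `X_b` (induced by swapping exponents). -/
noncomputable def swapVars {k : Type*} [CommRing k] {n : ℕ} (a b : Fin n)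
    (f : AddMonoidAlgebra k (Fin n →₀ ℤ)) : AddMonoidAlgebra k (Fin n →₀ ℤ) :=
  AddMonoidAlgebra.ofCoeff (Finsupp.mapDomain (Finsupp.equivMapDomain (Equiv.swap a b)) f.coeff)

namespace AddMonoidAlgebra

variable {k G : Type*} [CommSemiring k] [AddMonoid G]

noncomputable def supportedSubalgebra (S : AddSubmonoid G) : Subalgebra k (AddMonoidAlgebra k G) :=
  (supported k k (S : Set G)).toSubalgebra
    (by
      classical
      intro v hv
      obtain rfl := Finset.mem_singleton.1 (support_coeff_one_subset (Finset.mem_coe.1 hv))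
      exact S.zero_mem)
    (fun x y hx hy => by
      classical
      intro v hv
      obtain ⟨a, ha, b, hb, rfl⟩ := Finset.mem_add.1 (support_coeff_mul_subset x y hv)
      exact S.add_mem (hx ha) (hy hb))

theorem mem_supportedSubalgebra {S : AddSubmonoid G} {f : AddMonoidAlgebra k G} :
    f ∈ supportedSubalgebra S ↔ ↑f.coeff.support ⊆ (S : Set G) :=
  Iff.rfl

theorem single_mem_supportedSubalgebra {S : AddSubmonoid G} {v : G} (hv : v ∈ S) (r : k) :
    single v r ∈ supportedSubalgebra S :=
  fun _ hw => by
    obtain rfl := Finset.mem_singleton.1 (Finsupp.support_single_subset (Finset.mem_coe.1 hw))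
    exact hv

theorem supportedSubalgebra_le {S : AddSubmonoid G} {T : Subalgebra k (AddMonoidAlgebra k G)}
    (h : ∀ v ∈ S, single v 1 ∈ T) : supportedSubalgebra S ≤ T := by
  intro f hf
  have hspan : Submodule.span k (of' k G '' f.coeff.support) ≤ Subalgebra.toSubmodule T :=
    Submodule.span_le.2 (by
      rintro _ ⟨v, hv, rfl⟩
      exact h v (hf hv))
  exact hspan (mem_span_support_coeff f)

end AddMonoidAlgebra

open AddMonoidAlgebra

notation "X[" t "]" => mono (Finsupp.single t (1 : ℤ))

section LaurentPolynomials

variable {k : Type*} [CommRing k] {n : ℕ}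

theorem mono_add (u v : Fin n →₀ ℤ) :
    (mono (u + v) : AddMonoidAlgebra k (Fin n →₀ ℤ)) = mono u * mono v := by
  simp [mono, single_mul_single]

theorem mono_neg_mul_self (v : Fin n →₀ ℤ) :
    (mono (-v) * mono v : AddMonoidAlgebra k (Fin n →₀ ℤ)) = 1 := by
  rw [← mono_add, neg_add_cancel, mono, one_def]

theorem mono_eq_prod_pow {w : Fin n →₀ ℤ} (hw : 0 ≤ w) :
    (mono w : AddMonoidAlgebra k (Fin n →₀ ℤ)) = ∏ t, X[t] ^ (w t).toNat := by
  simp only [mono, single_pow, one_pow]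
  rw [prod_single, Finset.prod_const_one]
  congr 1
  ext t
  simpa [Finsupp.finsetSum_apply, Finsupp.single_apply] using hw t

theorem eq_zero_of_mono_mul_eq_self {v : Fin n →₀ ℤ} {t : Fin n} (ht : 0 < v t)
    {g : AddMonoidAlgebra k (Fin n →₀ ℤ)} (h : mono v * g = g) : g = 0 := by
  by_contra hg
  obtain ⟨w, hw, hmax⟩ := g.coeff.support.exists_max_image (fun w => w t)
    (Finsupp.support_nonempty_iff.2 (by rwa [Ne, coeff_eq_zero]))
  have hshift : g.coeff (v + w) = g.coeff w := by
    conv_lhs => rw [← h]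
    simp [mono, coeff_single_mul_apply]
  have hmem : v + w ∈ g.coeff.support := by
    rwa [Finsupp.mem_support_iff, hshift, ← Finsupp.mem_support_iff]
  have hle := hmax (v + w) hmem
  simp only [Finsupp.add_apply] at hle
  omega

theorem isLeftRegular_one_sub_mono {v : Fin n →₀ ℤ} (hv : v ≠ 0) :
    IsLeftRegular (1 - mono v : AddMonoidAlgebra k (Fin n →₀ ℤ)) := by
  intro f g hfg
  have hfix : mono v * (f - g) = f - g := by
    have : (1 - mono v) * (f - g) = 0 := by rw [mul_sub]; exact sub_eq_zero.2 hfg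
    linear_combination -this
  obtain ⟨t, ht⟩ := Finsupp.ne_iff.1 hv
  rw [← sub_eq_zero]
  rcases lt_or_gt_of_ne ht with hneg | hpos
  · refine eq_zero_of_mono_mul_eq_self (v := -v) (t := t) (by simpa using hneg) ?_
    conv_lhs => rw [← hfix, ← mul_assoc, mono_neg_mul_self, one_mul]
  · exact eq_zero_of_mono_mul_eq_self hpos hfix

variable (k n) in
noncomputable abbrev polynomialSubalgebra : Subalgebra k (AddMonoidAlgebra k (Fin n →₀ ℤ)) :=
  supportedSubalgebra (AddSubmonoid.nonneg (Fin n →₀ ℤ))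

theorem mem_polynomialSubalgebra {f : AddMonoidAlgebra k (Fin n →₀ ℤ)} :
    f ∈ polynomialSubalgebra k n ↔ ∀ v ∈ f.coeff.support, ∀ t, 0 ≤ v t := by
  simp [mem_supportedSubalgebra, Set.subset_def, Finsupp.le_def]

theorem X_mem_polynomialSubalgebra (t : Fin n) :
    (X[t] : AddMonoidAlgebra k (Fin n →₀ ℤ)) ∈ polynomialSubalgebra k n :=
  single_mem_supportedSubalgebra (AddSubmonoid.mem_nonneg.2 (by simp)) 1

theorem polynomialSubalgebra_le {T : Subalgebra k (AddMonoidAlgebra k (Fin n →₀ ℤ))}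
    (hT : ∀ t, X[t] ∈ T) : polynomialSubalgebra k n ≤ T :=
  supportedSubalgebra_le fun w hw => by
    rw [← mono, mono_eq_prod_pow (AddSubmonoid.mem_nonneg.1 hw)]
    exact T.prod_mem fun t _ => T.pow_mem (hT t) _

theorem swapVars_eq_domCongr (a b : Fin n) :
    swapVars (k := k) a b = domCongr k k (Finsupp.domCongr (Equiv.swap a b)) :=
  rfl

theorem swapVars_mul (a b : Fin n) (f g : AddMonoidAlgebra k (Fin n →₀ ℤ)) :
    swapVars a b (f * g) = swapVars a b f * swapVars a b g := by
  rw [swapVars_eq_domCongr, map_mul]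

theorem swapVars_X (a b t : Fin n) :
    swapVars (k := k) a b X[t] = X[Equiv.swap a b t] := by
  rw [swapVars_eq_domCongr]
  simp [mono]

theorem swapVars_mem_polynomialSubalgebra (a b : Fin n) {p : AddMonoidAlgebra k (Fin n →₀ ℤ)}
    (hp : p ∈ polynomialSubalgebra k n) : swapVars a b p ∈ polynomialSubalgebra k n := by
  rw [mem_polynomialSubalgebra] at hp ⊢
  intro v hv t
  rw [swapVars_eq_domCongr] at hv
  simp only [coeff_domCongr, Finsupp.mem_support_iff, Finsupp.domCongr_symm, Equiv.symm_swap,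
    Finsupp.domCongr_apply] at hv
  simpa using hp _ (Finsupp.mem_support_iff.2 hv) (Equiv.swap a b t)

variable (k) in
noncomputable def divDiffSubalgebra (a b : Fin n) :
    Subalgebra k (AddMonoidAlgebra k (Fin n →₀ ℤ)) where
  carrier := {p | p ∈ polynomialSubalgebra k n ∧
    ∃ h ∈ polynomialSubalgebra k n, p - swapVars a b p = (X[b] - X[a]) * h}
  mul_mem' := by
    rintro p q ⟨hp, h, hh, hph⟩ ⟨hq, h', hh', hqh⟩
    refine ⟨mul_mem hp hq, h * q + swapVars a b p * h',
      add_mem (mul_mem hh hq) (mul_mem (swapVars_mem_polynomialSubalgebra a b hp) hh'), ?_⟩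
    rw [swapVars_mul]
    linear_combination q * hph + swapVars a b p * hqh
  add_mem' := by
    rintro p q ⟨hp, h, hh, hph⟩ ⟨hq, h', hh', hqh⟩
    refine ⟨add_mem hp hq, h + h', add_mem hh hh', ?_⟩
    rw [swapVars_eq_domCongr, map_add, ← swapVars_eq_domCongr]
    linear_combination hph + hqh
  algebraMap_mem' r := by
    refine ⟨(polynomialSubalgebra k n).algebraMap_mem r, 0, zero_mem _, ?_⟩
    rw [swapVars_eq_domCongr, AlgEquiv.commutes, sub_self, mul_zero]

theorem X_mem_divDiffSubalgebra (a b t : Fin n) : X[t] ∈ divDiffSubalgebra k a b := by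
  refine ⟨X_mem_polynomialSubalgebra t, ?_⟩
  rw [swapVars_X]
  by_cases hta : t = a
  · subst hta
    exact ⟨-1, neg_mem (one_mem _), by rw [Equiv.swap_apply_left]; ring⟩
  by_cases htb : t = b
  · subst htb
    exact ⟨1, one_mem _, by rw [Equiv.swap_apply_right]; ring⟩
  · exact ⟨0, zero_mem _, by rw [Equiv.swap_apply_of_ne_of_ne hta htb]; ring⟩

theorem exists_sub_swapVars_eq_mul (a b : Fin n) {p : AddMonoidAlgebra k (Fin n →₀ ℤ)}
    (hp : p ∈ polynomialSubalgebra k n) :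
    ∃ h ∈ polynomialSubalgebra k n, p - swapVars a b p = (X[b] - X[a]) * h :=
  (polynomialSubalgebra_le (X_mem_divDiffSubalgebra a b) hp).2

end LaurentPolynomials

/-- If `p ∈ k[X₁,…,Xₙ]` is an ordinary polynomial, then
`X_{i+1}^{-1} Δᵢ(X_{i+1} p)` is again an ordinary polynomial. -/
theorem stmt11 {k : Type*} [CommRing k] {n : ℕ} (i : ℕ) (hi : i + 1 < n)
    (D : AddMonoidAlgebra k (Fin n →₀ ℤ) → AddMonoidAlgebra k (Fin n →₀ ℤ))
    (hD : ∀ f,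
      (1 - mono (Finsupp.single (⟨i, Nat.lt_of_succ_lt hi⟩ : Fin n) 1
          + Finsupp.single (⟨i + 1, hi⟩ : Fin n) (-1))) * D f
        = f - swapVars ⟨i, Nat.lt_of_succ_lt hi⟩ ⟨i + 1, hi⟩ f) :
    ∀ p : AddMonoidAlgebra k (Fin n →₀ ℤ),
      (∀ v ∈ p.coeff.support, ∀ t, 0 ≤ v t) →
      ∀ v ∈ (mono (Finsupp.single (⟨i + 1, hi⟩ : Fin n) (-1))
          * D (mono (Finsupp.single (⟨i + 1, hi⟩ : Fin n) 1) * p)).coeff.support,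
        ∀ t, 0 ≤ v t := by
  intro p hp
  set a : Fin n := ⟨i, Nat.lt_of_succ_lt hi⟩
  set b : Fin n := ⟨i + 1, hi⟩
  set m : Fin n →₀ ℤ := Finsupp.single a 1 + Finsupp.single b (-1)
  have hab : a ≠ b := by simp [a, b, Fin.ext_iff]
  have hm : m ≠ 0 := Finsupp.ne_iff.2 ⟨a, by simp [m, hab.symm]⟩
  have hmX : (mono m * X[b] : AddMonoidAlgebra k (Fin n →₀ ℤ)) = X[a] := by
    rw [← mono_add, add_assoc, ← Finsupp.single_add, neg_add_cancel, Finsupp.single_zero,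
      add_zero]
  rw [← mem_polynomialSubalgebra] at hp ⊢
  obtain ⟨h, hh, hdiff⟩ := exists_sub_swapVars_eq_mul a b hp
  have hDp : D (X[b] * p) = X[b] * (X[b] * h + swapVars a b p) := by
    apply isLeftRegular_one_sub_mono hm
    beta_reduce
    rw [hD, swapVars_mul, swapVars_X, Equiv.swap_apply_right]
    linear_combination X[b] * hdiff + (X[b] * h + swapVars a b p) * hmX
  rw [hDp, ← mul_assoc, Finsupp.single_neg, mono_neg_mul_self, one_mul]
  exact add_mem (mul_mem (X_mem_polynomialSubalgebra b) hh)
    (swapVars_mem_polynomialSubalgebra a b hp)
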